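/- Let a, b be coprime positive integers, c := a+b, and r ≥ 1 an integer. Let g = Σ_{t=0}^r c_t·T^t ∈ ℂ[T] be a squarefree polynomial of degree r with g(0) ≠ 0, and define h := Σ_{t=0}^r c_t·x^{a·t}·y^{b·t}·z^{c·(r−t)} ∈ ℂ[x,y,z]. Then h is squarefree and h is a product of a nonzero constant and exactly r pairwise non-associated irreducible polynomials of ℂ[x,y,z] (namely x^a·y^b − μ·z^c for μ running over the r distinct roots of g); in particular the number of irreducible factors of h, counted in its factorization into irreducibles, is exactly r. -/

import Mathlib

/-!
Substituting `(x^a y^b, z^c)` into the homogenization of `g` gives `h`, so the factorization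
`g = lc(g) ∏ (T - μ)` over the distinct roots of `g` yields `h = lc(g) ∏ (x^a y^b - μ z^c)`.
To see that `x^a y^b - μ z^c` is irreducible, swap `x` and `y` if necessary so that `a` is odd,
and view it as the polynomial `y^b x^a - μ z^c` in `x` over the integrally closed ring
`ℂ[y, z]`. It is primitive because `y ∤ μ z^c`, so by Gauss's lemma and Capelli's criterion it
suffices that `μ z^c / y^b` is not an `ℓ`-th power in the fraction field for primes `ℓ ∣ a`;
this holds since `ℓ ∤ b`. Units are constants, so the factors for distinct `μ` are not
associated, and the product is squarefree.
-/

open MvPolynomial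

theorem pow_mul_prime_pow_ne_algebraMap {R K : Type*} [CommRing R] [IsDomain R]
    [IsIntegrallyClosed R] [Field K] [Algebra R K] [IsFractionRing R K] {π q : R}
    (hπ : Prime π) (hq : ¬ π ∣ q) {ℓ b : ℕ} (hℓb : ¬ ℓ ∣ b) (u : K) :
    u ^ ℓ * algebraMap R K π ^ b ≠ algebraMap R K q := by
  intro hu
  have hinj := IsFractionRing.injective R K
  obtain rfl | hℓ := ℓ.eq_zero_or_pos
  · have hb : b ≠ 0 := by rintro rfl; exact hℓb (dvd_refl 0)
    rw [pow_zero, one_mul, ← map_pow] at hu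
    exact hq ((dvd_pow_self π hb).trans (hinj hu).dvd)
  set m := b % ℓ
  have hm : m ≠ 0 := fun h => hℓb (Nat.dvd_of_mod_eq_zero h)
  have hmℓ : m < ℓ := Nat.mod_lt b hℓ
  -- Rounding `b` up to a multiple of `ℓ` makes `u` times a power of `π` integral over `R`.
  have hpow :
      (u * algebraMap R K π ^ (b / ℓ + 1)) ^ ℓ = algebraMap R K (q * π ^ (ℓ - m)) := by
    have hexp : (b / ℓ + 1) * ℓ = b + (ℓ - m) := by
      have := Nat.div_add_mod' b ℓ
      rw [add_mul, one_mul]; omega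
    rw [mul_pow, ← pow_mul, hexp, pow_add, ← mul_assoc, hu, map_mul, map_pow]
  obtain ⟨s, hs⟩ := IsIntegrallyClosed.isIntegral_iff.mp
    (IsIntegral.of_pow hℓ (hpow ▸ isIntegral_algebraMap))
  have hsℓ : s ^ ℓ = q * π ^ (ℓ - m) := hinj (by rw [map_pow, hs, hpow])
  obtain ⟨t, rfl⟩ : π ∣ s := hπ.dvd_of_dvd_pow (hsℓ ▸ dvd_mul_of_dvd_right
    (dvd_pow_self π (by omega)) q)
  have hq' : π ^ m * t ^ ℓ = q := by
    apply mul_left_cancel₀ (pow_ne_zero (ℓ - m) hπ.ne_zero)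
    rw [mul_comm _ q, ← hsℓ, mul_pow, ← mul_assoc, ← pow_add, Nat.sub_add_cancel hmℓ.le]
  exact hq (hq' ▸ dvd_mul_of_dvd_left (dvd_pow_self π hm) _)

theorem Finset.squarefree_prod_of_irreducible_of_not_associated {R ι : Type*}
    [CommMonoidWithZero R] [IsCancelMulZero R] [DecompositionMonoid R] {s : Finset ι}
    {f : ι → R} (hirr : ∀ i ∈ s, Irreducible (f i))
    (hna : ∀ i ∈ s, ∀ j ∈ s, i ≠ j → ¬ Associated (f i) (f j)) :
    Squarefree (∏ i ∈ s, f i) :=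
  Finset.squarefree_prod_of_pairwise_isCoprime
    (fun i hi j hj hij => (hirr i hi).isRelPrime_iff_not_dvd.mpr fun hdvd =>
      hna i hi j hj hij ((hirr i hi).associated_of_dvd (hirr j hj) hdvd))
    (fun i hi => (hirr i hi).squarefree)

namespace Polynomial

theorem irreducible_C_prime_pow_mul_X_pow_sub_C {R : Type*} [CommRing R] [IsDomain R]
    [IsIntegrallyClosed R] {π q : R} (hπ : Prime π) (hq : ¬ π ∣ q) {n b : ℕ} (hn : Odd n)
    (hnb : n.Coprime b) :
    Irreducible (C (π ^ b) * X ^ n - C q) := by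
  set K := FractionRing R
  have hn0 : n ≠ 0 := hn.pos.ne'
  have hprim : (C (π ^ b) * X ^ n - C q).IsPrimitive := by
    intro r hr
    rw [C_dvd_iff_dvd_coeff] at hr
    have hrπ : r ∣ π ^ b := by
      simpa only [coeff_sub, coeff_C_mul, coeff_X_pow_self, coeff_C, if_neg hn0, mul_one,
        sub_zero] using hr n
    have hrq : r ∣ q := by
      simpa only [coeff_sub, coeff_C_mul, coeff_X_pow, coeff_C, if_neg hn0.symm, mul_zero,
        if_pos, zero_sub, dvd_neg] using hr 0
    obtain ⟨i, -, hri⟩ := (dvd_prime_pow hπ b).mp hrπ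
    rcases i with _ | i
    · simpa using hri
    · exact absurd ((dvd_pow_self π i.succ_ne_zero).trans (hri.symm.dvd.trans hrq)) hq
  apply hprim.irreducible_of_irreducible_map_of_injective (IsFractionRing.injective R K)
  have hπK : algebraMap R K π ^ b ≠ 0 :=
    pow_ne_zero b ((map_ne_zero_iff _ (IsFractionRing.injective R K)).mpr hπ.ne_zero)
  have hmap : (C (π ^ b) * X ^ n - C q).map (algebraMap R K) =
      C (algebraMap R K π ^ b) * (X ^ n - C (algebraMap R K q / algebraMap R K π ^ b)) := by
    rw [mul_sub, ← C_mul, mul_div_cancel₀ _ hπK]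
    simp
  rw [hmap, ← (isUnit_C.mpr hπK.isUnit).unit_spec, irreducible_units_mul]
  -- Capelli: for odd `n`, `X ^ n - w` is irreducible unless `w` is an `ℓ`-th power, `ℓ ∣ n`.
  refine X_pow_sub_C_irreducible_of_odd hn fun p hp hpn v hv => ?_
  have hpb : ¬ p ∣ b := (Nat.Prime.coprime_iff_not_dvd hp).mp (hnb.coprime_dvd_left hpn)
  exact pow_mul_prime_pow_ne_algebraMap hπ hq hpb v (by rw [hv, div_mul_cancel₀ _ hπK])

section IsAlgClosed

variable {k : Type*} [Field k] [IsAlgClosed k] [DecidableEq k] {g : k[X]}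

theorem C_leadingCoeff_mul_prod_toFinset_roots (hg : Squarefree g) :
    C g.leadingCoeff * ∏ μ ∈ g.roots.toFinset, (X - C μ) = g := by
  rw [Finset.prod_eq_multiset_prod, Multiset.toFinset_val,
    (nodup_roots (PerfectField.separable_iff_squarefree.mpr hg)).dedup]
  exact C_leadingCoeff_mul_prod_multiset_X_sub_C (splits_iff_card_roots.mp (IsAlgClosed.splits g))

theorem card_toFinset_roots (hg : Squarefree g) : g.roots.toFinset.card = g.natDegree := by
  rw [Multiset.toFinset_card_of_nodup
      (nodup_roots (PerfectField.separable_iff_squarefree.mpr hg)),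
    ← (IsAlgClosed.splits g).natDegree_eq_card_roots]

theorem homogenize_natDegree_eq_C_leadingCoeff_mul_prod (hg : Squarefree g) :
    g.homogenize g.natDegree =
      MvPolynomial.C g.leadingCoeff * ∏ μ ∈ g.roots.toFinset, (.X 0 - .C μ * .X 1) := by
  have hdeg : g.natDegree = ∑ _μ ∈ g.roots.toFinset, 1 := by
    rw [Finset.sum_const, smul_eq_mul, mul_one, card_toFinset_roots hg]
  calc g.homogenize g.natDegree
      = (C g.leadingCoeff * ∏ μ ∈ g.roots.toFinset, (X - C μ)).homogenize
          (∑ _μ ∈ g.roots.toFinset, 1) := by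
        rw [C_leadingCoeff_mul_prod_toFinset_roots hg, ← hdeg]
    _ = _ := by
        rw [homogenize_C_mul, homogenize_finsetProd (s := g.roots.toFinset)
          (p := fun μ => X - C μ) (n := fun _ => 1) fun μ _ => natDegree_X_sub_C_le μ]
        refine congrArg _ (Finset.prod_congr rfl fun μ _ => ?_)
        rw [homogenize_sub, homogenize_X one_ne_zero, homogenize_C, Nat.sub_self, pow_zero,
          mul_one, pow_one]

end IsAlgClosed

theorem aeval_homogenize {R A : Type*} [CommSemiring R] [CommSemiring A] [Algebra R A]
    (p : R[X]) (n : ℕ) (v : Fin 2 → A) :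
    MvPolynomial.aeval v (p.homogenize n) =
      ∑ t ∈ Finset.range (n + 1), algebraMap R A (p.coeff t) * v 0 ^ t * v 1 ^ (n - t) := by
  rw [homogenize, map_sum, Finset.Nat.sum_antidiagonal_eq_sum_range_succ_mk]
  refine Finset.sum_congr rfl fun t _ => ?_
  rw [Finsupp.update_eq_add_single (by simp), MvPolynomial.monomial_single_add,
    ← MvPolynomial.C_mul_X_pow_eq_monomial]
  simp only [map_mul, map_pow, MvPolynomial.aeval_X, MvPolynomial.aeval_C]
  ring

end Polynomial

section ThreeVariables

variable {k : Type*} [Field k] {a b c : ℕ}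

theorem X_not_dvd_C_mul_X_pow {σ : Type*} {i j : σ} (hij : i ≠ j) {μ : k} (hμ : μ ≠ 0) :
    ¬ (X i : MvPolynomial σ k) ∣ C μ * X j ^ c := by
  intro hdvd
  rcases X_prime.dvd_or_dvd hdvd with hC | hXj
  · exact X_prime.not_isUnit (isUnit_of_dvd_unit hC (hμ.isUnit.map C))
  · exact hij (X_dvd_X.mp (X_prime.dvd_of_dvd_pow hXj))

theorem irreducible_X_pow_mul_X_pow_sub_C_mul_X_pow_of_odd (ha : Odd a) (hab : a.Coprime b)
    {μ : k} (hμ : μ ≠ 0) :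
    Irreducible (X 0 ^ a * X 1 ^ b - C μ * X 2 ^ c : MvPolynomial (Fin 3) k) := by
  rw [← MulEquiv.irreducible_iff (finSuccEquiv k 2)]
  have hmap : finSuccEquiv k 2 (X 0 ^ a * X 1 ^ b - C μ * X 2 ^ c) =
      Polynomial.C (X 0 ^ b) * Polynomial.X ^ a - Polynomial.C (C μ * X 1 ^ c) := by
    have hC : finSuccEquiv k 2 (C μ) = Polynomial.C (C μ) := by simp [finSuccEquiv_apply]
    rw [show (1 : Fin 3) = Fin.succ 0 from rfl, show (2 : Fin 3) = Fin.succ 1 from rfl]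
    simp only [map_sub, map_mul, map_pow, finSuccEquiv_X_zero, finSuccEquiv_X_succ, hC]
    ring
  rw [hmap]
  exact Polynomial.irreducible_C_prime_pow_mul_X_pow_sub_C X_prime
    (X_not_dvd_C_mul_X_pow (by decide) hμ) ha hab

theorem irreducible_X_pow_mul_X_pow_sub_C_mul_X_pow (hab : a.Coprime b) {μ : k} (hμ : μ ≠ 0) :
    Irreducible (X 0 ^ a * X 1 ^ b - C μ * X 2 ^ c : MvPolynomial (Fin 3) k) := by
  rcases Nat.even_or_odd a with ha | ha
  · have hb : Odd b := (hab.coprime_dvd_left ha.two_dvd).odd_of_left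
    have hswap := (MulEquiv.irreducible_iff (renameEquiv k (Equiv.swap (0 : Fin 3) 1))).mpr
      (irreducible_X_pow_mul_X_pow_sub_C_mul_X_pow_of_odd (c := c) hb hab.symm hμ)
    convert hswap using 1
    simp [renameEquiv_apply, rename_X, Equiv.swap_apply_of_ne_of_ne, mul_comm]
  · exact irreducible_X_pow_mul_X_pow_sub_C_mul_X_pow_of_odd ha hab hμ

theorem not_associated_X_pow_mul_X_pow_sub_C_mul_X_pow (hab : a ≠ 0 ∨ b ≠ 0) {μ ν : k}
    (hμν : μ ≠ ν) :
    ¬ Associated (X 0 ^ a * X 1 ^ b - C μ * X 2 ^ c : MvPolynomial (Fin 3) k)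
      (X 0 ^ a * X 1 ^ b - C ν * X 2 ^ c) := by
  rintro ⟨u, hu⟩
  obtain ⟨r, -, hr⟩ := isUnit_iff_eq_C_of_isReduced.mp u.isUnit
  rw [hr] at hu
  -- Evaluating at `(1, 1, 1)` and `(0, 0, 1)` forces `r = 1` and then `μ = ν`.
  have h1 := congrArg (eval 1) hu
  have h0 := congrArg (eval (Pi.single 2 1)) hu
  have hzero : (0 : k) ^ a * 0 ^ b = 0 := by rcases hab with h | h <;> simp [h]
  simp only [map_mul, map_sub, map_pow, eval_X, eval_C, Pi.one_apply, one_pow, mul_one] at h1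
  simp only [map_mul, map_sub, map_pow, eval_X, eval_C, Pi.single_apply, Fin.reduceEq,
    if_false, if_true, one_pow, mul_one, hzero] at h0
  exact hμν (by linear_combination (μ - 1) * h0 - μ * h1)

theorem sum_C_coeff_mul_X_pow_eq_C_leadingCoeff_mul_prod [IsAlgClosed k] [DecidableEq k]
    {g : Polynomial k} (hg : Squarefree g) :
    ∑ t ∈ Finset.range (g.natDegree + 1),
        C (g.coeff t) * X 0 ^ (a * t) * X 1 ^ (b * t) * X 2 ^ (c * (g.natDegree - t)) =
      C g.leadingCoeff * ∏ μ ∈ g.roots.toFinset,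
        (X 0 ^ a * X 1 ^ b - C μ * X 2 ^ c : MvPolynomial (Fin 3) k) := by
  have hhom := congrArg (aeval ![(X 0 : MvPolynomial (Fin 3) k) ^ a * X 1 ^ b, X 2 ^ c])
    (Polynomial.homogenize_natDegree_eq_C_leadingCoeff_mul_prod hg)
  simp only [Polynomial.aeval_homogenize, algebraMap_eq, Matrix.cons_val_zero,
    Matrix.cons_val_one, Matrix.cons_val_fin_one, mul_pow, ← pow_mul, map_mul, map_prod,
    map_sub, aeval_C, aeval_X] at hhom
  rw [← hhom]
  simp only [mul_assoc]

end ThreeVariables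

theorem stmt6_general (a b c r : ℕ) (hab : Nat.Coprime a b)
    (g : Polynomial ℂ) (hg : g.degree = r) (hgsf : Squarefree g)
    (hg0 : g.eval 0 ≠ 0)
    (h : MvPolynomial (Fin 3) ℂ)
    (hh : h = ∑ t ∈ Finset.range (r + 1),
        C (g.coeff t) * X 0 ^ (a * t) * X 1 ^ (b * t) * X 2 ^ (c * (r - t))) :
    Squarefree h ∧
    g.roots.toFinset.card = r ∧
    h = C g.leadingCoeff
        * ∏ μ ∈ g.roots.toFinset,
            ((X 0 : MvPolynomial (Fin 3) ℂ) ^ a * X 1 ^ b - C μ * X 2 ^ c) ∧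
    (∀ μ ∈ g.roots.toFinset,
        Irreducible ((X 0 : MvPolynomial (Fin 3) ℂ) ^ a * X 1 ^ b - C μ * X 2 ^ c)) ∧
    (∀ μ ∈ g.roots.toFinset, ∀ ν ∈ g.roots.toFinset, μ ≠ ν →
        ¬ Associated ((X 0 : MvPolynomial (Fin 3) ℂ) ^ a * X 1 ^ b - C μ * X 2 ^ c)
            ((X 0 : MvPolynomial (Fin 3) ℂ) ^ a * X 1 ^ b - C ν * X 2 ^ c)) := by
  have hr : g.natDegree = r := Polynomial.natDegree_eq_of_degree_eq_some hg
  have hroots : ∀ μ ∈ g.roots.toFinset, μ ≠ 0 := by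
    rintro μ hμ rfl
    exact hg0 (Polynomial.isRoot_of_mem_roots (Multiset.mem_toFinset.mp hμ))
  have hab0 : a ≠ 0 ∨ b ≠ 0 := by
    by_contra! h0
    simp [h0.1, h0.2] at hab
  have hirr := fun μ hμ =>
    irreducible_X_pow_mul_X_pow_sub_C_mul_X_pow (c := c) hab (hroots μ hμ)
  have hna := fun μ (_ : μ ∈ g.roots.toFinset) ν (_ : ν ∈ g.roots.toFinset) hμν =>
    not_associated_X_pow_mul_X_pow_sub_C_mul_X_pow (c := c) hab0 (μ := μ) (ν := ν) hμν
  have hprod : h = C g.leadingCoeff * ∏ μ ∈ g.roots.toFinset,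
      ((X 0 : MvPolynomial (Fin 3) ℂ) ^ a * X 1 ^ b - C μ * X 2 ^ c) := by
    rw [hh, ← hr]
    exact sum_C_coeff_mul_X_pow_eq_C_leadingCoeff_mul_prod hgsf
  refine ⟨?_, hr ▸ Polynomial.card_toFinset_roots hgsf, hprod, hirr, hna⟩
  rw [hprod]
  exact (associated_unit_mul_left _ _
    ((Polynomial.leadingCoeff_ne_zero.mpr hgsf.ne_zero).isUnit.map C)).squarefree_iff.mpr
    (Finset.squarefree_prod_of_irreducible_of_not_associated hirr hna)

/-- If `a, b` are coprime positive integers, `c = a + b`, `g` is a squarefree polynomial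
of degree `r ≥ 1` with `g(0) ≠ 0`, and `h = Σ c_t x^{at} y^{bt} z^{c(r−t)}`, then `h` is
squarefree and `h` is a nonzero constant times a product of exactly `r` pairwise
non-associated irreducible polynomials, namely `x^a y^b − μ z^c` for `μ` running over the
`r` distinct roots of `g`. -/
theorem stmt6 (a b c r : ℕ) (ha : 0 < a) (hb : 0 < b) (hab : Nat.Coprime a b)
    (hc : c = a + b) (hr : 1 ≤ r)
    (g : Polynomial ℂ) (hg : g.degree = r) (hgsf : Squarefree g)
    (hg0 : g.eval 0 ≠ 0)
    (h : MvPolynomial (Fin 3) ℂ)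
    (hh : h = ∑ t ∈ Finset.range (r + 1),
        C (g.coeff t) * X 0 ^ (a * t) * X 1 ^ (b * t) * X 2 ^ (c * (r - t))) :
    Squarefree h ∧
    g.roots.toFinset.card = r ∧
    h = C g.leadingCoeff
        * ∏ μ ∈ g.roots.toFinset,
            ((X 0 : MvPolynomial (Fin 3) ℂ) ^ a * X 1 ^ b - C μ * X 2 ^ c) ∧
    (∀ μ ∈ g.roots.toFinset,
        Irreducible ((X 0 : MvPolynomial (Fin 3) ℂ) ^ a * X 1 ^ b - C μ * X 2 ^ c)) ∧
    (∀ μ ∈ g.roots.toFinset, ∀ ν ∈ g.roots.toFinset, μ ≠ ν →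
        ¬ Associated ((X 0 : MvPolynomial (Fin 3) ℂ) ^ a * X 1 ^ b - C μ * X 2 ^ c)
            ((X 0 : MvPolynomial (Fin 3) ℂ) ^ a * X 1 ^ b - C ν * X 2 ^ c)) :=
  stmt6_general a b c r hab g hg hgsf hg0 h hh
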